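/- Let x, y be real numbers with π/2 ≤ y < x ≤ π, and write sinc(z) = sin(z)/z. Then sinc(y) · (1 − (2/π)·y·(1 − y/x)) · cos( y·(1 − y/x) / (1 − (2/π)·y·(1 − y/x)) ) ≥ sinc(x). -/

import Mathlib

/-!
Put `t = y (1 - y / x)` and `g a = a ^ 2 / (a - t)`, so that `g y = x`. For `v = g (π / 2)`
one has `t / (1 - 2 t / π) = v - π / 2`, and the right-hand side becomes
`sinc y * sinc v / sinc (π / 2)`. It therefore suffices that `a ↦ sinc (g a) / sinc a` is
antitone on `[π / 2, y]`. Since `g' a = g a (2 a - g a) / a ^ 2`, the logarithmic derivative is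
nonpositive exactly when `z ↦ (sin z - z cos z) (2 a - z) / sin z` is larger at `g a` than at
`a`. That function is monotone on `[a, g a]`: its derivative has the sign of
`(2 a - z) (z - sin z cos z) - sin z (sin z - z cos z)`, and as `2 a ≥ π` this follows from
`sin c (sin c - c cos c) ≤ (c - sin c cos c) (π - c)` on `[π / 2, π]`. Writing `c = π - ε`,
the latter is an elementary estimate that rests on the Cusa–Huygens inequality
`3 sin θ ≤ θ (2 + cos θ)`.
-/

open Real Set

lemma mul_cos_le_sin {θ : ℝ} (h0 : 0 ≤ θ) (hπ : θ ≤ π) : θ * cos θ ≤ sin θ := by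
  rcases lt_or_ge θ (π / 2) with h | h
  · have hcos : 0 < cos θ := cos_pos_of_mem_Ioo ⟨by linarith [pi_pos], h⟩
    simpa [tan_eq_sin_div_cos, le_div_iff₀ hcos] using le_tan h0 h
  · nlinarith [cos_nonpos_of_pi_div_two_le_of_le h (by linarith),
      sin_nonneg_of_nonneg_of_le_pi h0 hπ]

lemma three_mul_sin_le_mul_two_add_cos {θ : ℝ} (h0 : 0 ≤ θ) (hπ : θ ≤ π) :
    3 * sin θ ≤ θ * (2 + cos θ) := by
  have hmono : MonotoneOn (fun z => z * (2 + cos z) - 3 * sin z) (Icc 0 π) := by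
    refine monotoneOn_of_deriv_nonneg (convex_Icc 0 π) (by fun_prop) (by fun_prop) fun z hz => ?_
    obtain ⟨hz0, hzπ⟩ : z ∈ Ioo 0 π := by rwa [interior_Icc] at hz
    have hd : HasDerivAt (fun z => z * (2 + cos z) - 3 * sin z)
        (1 * (2 + cos z) + z * -sin z - 3 * cos z) z :=
      ((hasDerivAt_id z).mul ((hasDerivAt_cos z).const_add 2)).sub
        ((hasDerivAt_sin z).const_mul 3)
    rw [hd.deriv]
    have hw := mul_cos_le_sin (θ := z / 2) (by linarith) (by linarith)
    have hs := sin_nonneg_of_nonneg_of_le_pi (x := z / 2) (by linarith) (by linarith)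
    rw [show z = 2 * (z / 2) by ring, sin_two_mul, cos_two_mul_eq_one_sub]
    -- in half angles the derivative is `4 sin (z/2) (sin (z/2) - (z/2) cos (z/2))`
    nlinarith [mul_nonneg hs (sub_nonneg.2 hw)]
  simpa using hmono ⟨le_rfl, pi_pos.le⟩ ⟨h0, hπ⟩ h0

lemma sin_sq_le_two_thirds_mul_pi_sub {ε : ℝ} (h0 : 0 ≤ ε) (h1 : ε ≤ π / 2) :
    sin ε ^ 2 ≤ 2 / 3 * ε * (π - ε) := by
  rcases le_total ε 1 with h | h
  · nlinarith [sin_sq_le_sq (x := ε), pi_gt_three, mul_nonneg h0 (sub_nonneg.2 h)]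
  · nlinarith [sin_sq_le_one ε, pi_gt_three,
      mul_nonneg (sub_nonneg.2 h) (by linarith : 0 ≤ π - 1 - ε)]

lemma sin_mul_sin_sub_mul_cos_le {c : ℝ} (h0 : π / 2 ≤ c) (h1 : c ≤ π) :
    sin c * (sin c - c * cos c) ≤ (c - sin c * cos c) * (π - c) := by
  obtain ⟨ε, rfl, hε0, hε1⟩ : ∃ ε, c = π - ε ∧ 0 ≤ ε ∧ ε ≤ π / 2 :=
    ⟨π - c, by ring, by linarith, by linarith⟩
  rw [sin_pi_sub, cos_pi_sub]
  have hs0 : 0 ≤ sin ε := sin_nonneg_of_nonneg_of_le_pi hε0 (by linarith [pi_pos])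
  have hc0 : 0 ≤ cos ε := cos_nonneg_of_mem_Icc ⟨by linarith [pi_pos], hε1⟩
  -- In terms of `q = ε - sin ε cos ε` the claim reads `sin ε ^ 4 ≤ q * (π - q)`.
  have hq : 2 / 3 * ε * sin ε ^ 2 ≤ ε - sin ε * cos ε := by
    have := three_mul_sin_le_mul_two_add_cos (θ := 2 * ε) (by linarith) (by linarith)
    rw [sin_two_mul, cos_two_mul_eq_one_sub] at this
    linarith
  have key : sin ε ^ 4 ≤ (ε - sin ε * cos ε) * (π - (ε - sin ε * cos ε)) :=
    calc sin ε ^ 4 ≤ sin ε ^ 2 * (2 / 3 * ε * (π - ε)) := by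
          nlinarith [sin_sq_le_two_thirds_mul_pi_sub hε0 hε1, sq_nonneg (sin ε)]
      _ = 2 / 3 * ε * sin ε ^ 2 * (π - ε) := by ring
      _ ≤ (ε - sin ε * cos ε) * (π - ε) := by gcongr; linarith
      _ ≤ (ε - sin ε * cos ε) * (π - (ε - sin ε * cos ε)) := by
          gcongr
          · nlinarith [sq_nonneg (sin ε)]
          · nlinarith [mul_nonneg hs0 hc0]
  linear_combination key - sin ε ^ 2 * sin_sq_add_cos_sq ε

lemma monotoneOn_sin_sub_mul_cos_mul_div_sin {a c : ℝ} (ha : π / 2 ≤ a) (hc : c < π) :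
    MonotoneOn (fun z => (sin z - z * cos z) * (2 * a - z) / sin z) (Icc a c) := by
  have hsin : ∀ z ∈ Icc a c, sin z ≠ 0 := fun z hz =>
    (sin_pos_of_pos_of_lt_pi (by linarith [pi_pos, hz.1]) (by linarith [hz.2])).ne'
  have hd : ∀ z ∈ Icc a c, HasDerivAt (fun z => (sin z - z * cos z) * (2 * a - z) / sin z)
      (((2 * a - z) * (z - sin z * cos z) - sin z * (sin z - z * cos z)) / sin z ^ 2) z := by
    intro z hz
    have := (((hasDerivAt_sin z).sub ((hasDerivAt_id z).mul (hasDerivAt_cos z))).mul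
      ((hasDerivAt_id z).const_sub (2 * a))).div (hasDerivAt_sin z) (hsin z hz)
    refine this.congr_deriv ?_
    simp only [id, Pi.sub_apply, Pi.mul_apply]
    congr 1
    linear_combination z * (2 * a - z) * sin_sq_add_cos_sq z
  refine monotoneOn_of_deriv_nonneg (convex_Icc a c)
    (fun z hz => (hd z hz).continuousAt.continuousWithinAt)
    (fun z hz => (hd z (interior_subset hz)).differentiableAt.differentiableWithinAt)
    fun z hz => ?_
  rw [(hd z (interior_subset hz)).deriv]
  obtain ⟨haz, hzc⟩ : z ∈ Ioo a c := by rwa [interior_Icc] at hz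
  have hcos : cos z ≤ 0 := cos_nonpos_of_pi_div_two_le_of_le (by linarith) (by linarith)
  have hsc : 0 ≤ z - sin z * cos z := by
    nlinarith [sin_nonneg_of_nonneg_of_le_pi (x := z) (by linarith) (by linarith)]
  have hc := sin_mul_sin_sub_mul_cos_le (c := z) (by linarith) (by linarith)
  have h2a : (π - z) * (z - sin z * cos z) ≤ (2 * a - z) * (z - sin z * cos z) := by
    gcongr
    linarith
  exact div_nonneg (by linarith) (sq_nonneg _)

lemma hasDerivAt_log_sin_div_self {z : ℝ} (h0 : 0 < z) (hπ : z < π) :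
    HasDerivAt (fun z => log (sin z / z)) (-(sin z - z * cos z) / (z * sin z)) z := by
  have hs := sin_pos_of_pos_of_lt_pi h0 hπ
  refine (((hasDerivAt_sin z).div (hasDerivAt_id z) h0.ne').log (div_pos hs h0).ne').congr_deriv ?_
  simp only [id, Pi.div_apply]
  field_simp
  ring

lemma le_sq_div_sub {t a : ℝ} (ht : 0 ≤ t) (hta : t < a) : a ≤ a ^ 2 / (a - t) := by
  rw [le_div_iff₀ (sub_pos.2 hta)]
  nlinarith

lemma monotoneOn_sq_div_sub {t : ℝ} (ht : 0 < t) :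
    MonotoneOn (fun a => a ^ 2 / (a - t)) (Ici (2 * t)) := by
  intro a ha b hb hab
  simp only [mem_Ici] at ha hb
  rw [div_le_div_iff₀ (by linarith) (by linarith)]
  have : t * (a + b) ≤ a * b := by nlinarith
  nlinarith [mul_nonneg (sub_nonneg.2 hab) (sub_nonneg.2 this)]

lemma antitoneOn_log_sin_div_sq_div_sub {t B : ℝ} (ht0 : 0 < t) (ht : t ≤ π / 4)
    (hB : B ^ 2 / (B - t) < π) :
    AntitoneOn (fun a => log (sin (a ^ 2 / (a - t)) / (a ^ 2 / (a - t))) - log (sin a / a))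
      (Icc (π / 2) B) := by
  have hfacts : ∀ a ∈ Icc (π / 2) B,
      t < a ∧ a ≤ a ^ 2 / (a - t) ∧ a ^ 2 / (a - t) < π := by
    intro a ⟨ha, haB⟩
    have hta : t < a := by linarith [pi_pos]
    refine ⟨hta, le_sq_div_sub ht0.le hta, lt_of_le_of_lt ?_ hB⟩
    exact monotoneOn_sq_div_sub ht0 (by simp only [mem_Ici]; linarith)
      (by simp only [mem_Ici]; linarith) haB
  have hd : ∀ a ∈ Icc (π / 2) B, HasDerivAt
      (fun a => log (sin (a ^ 2 / (a - t)) / (a ^ 2 / (a - t))) - log (sin a / a))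
      (((sin a - a * cos a) * a / sin a -
        (sin (a ^ 2 / (a - t)) - a ^ 2 / (a - t) * cos (a ^ 2 / (a - t))) *
          (2 * a - a ^ 2 / (a - t)) / sin (a ^ 2 / (a - t))) / a ^ 2) a := by
    intro a ha
    obtain ⟨hta, hac, hcπ⟩ := hfacts a ha
    have ha0 : 0 < a := by linarith
    have hsa := sin_pos_of_pos_of_lt_pi ha0 (by linarith)
    have hsc := sin_pos_of_pos_of_lt_pi (by linarith) hcπ
    have hg : HasDerivAt (fun a => a ^ 2 / (a - t)) (a * (a - 2 * t) / (a - t) ^ 2) a := by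
      refine ((hasDerivAt_pow 2 a).div ((hasDerivAt_id a).sub_const t)
        (sub_pos.2 hta).ne').congr_deriv ?_
      simp only [id]
      ring
    refine (((hasDerivAt_log_sin_div_self (by linarith) hcπ).comp a hg).sub
      (hasDerivAt_log_sin_div_self ha0 (by linarith))).congr_deriv ?_
    have : a - t ≠ 0 := (sub_pos.2 hta).ne'
    field_simp
    ring
  refine antitoneOn_of_deriv_nonpos (convex_Icc _ _)
    (fun a ha => (hd a ha).continuousAt.continuousWithinAt)
    (fun a ha => (hd a (interior_subset ha)).differentiableAt.differentiableWithinAt)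
    fun a ha => ?_
  have ha' := interior_subset ha
  rw [(hd a ha').deriv]
  obtain ⟨-, hac, hcπ⟩ := hfacts a ha'
  have := monotoneOn_sin_sub_mul_cos_mul_div_sin ha'.1 hcπ ⟨le_rfl, hac⟩ ⟨hac, le_rfl⟩ hac
  refine div_nonpos_of_nonpos_of_nonneg ?_ (sq_nonneg a)
  simp only [show 2 * a - a = a by ring] at this
  linarith

lemma one_sub_mul_cos_div_eq {t : ℝ} (ht : t < π / 2) :
    (1 - 2 / π * t) * cos (t / (1 - 2 / π * t)) =
      sin ((π / 2) ^ 2 / (π / 2 - t)) / ((π / 2) ^ 2 / (π / 2 - t)) * (π / 2) := by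
  have hπ := pi_pos
  have h : π / 2 - t ≠ 0 := by linarith
  have hA : 1 - 2 / π * t ≠ 0 := by
    rw [show 1 - 2 / π * t = (π - 2 * t) / π by field_simp]
    exact div_ne_zero (by linarith) hπ.ne'
  have : t / (1 - 2 / π * t) = (π / 2) ^ 2 / (π / 2 - t) - π / 2 := by
    rw [div_eq_iff hA, div_sub' h, div_mul_eq_mul_div, eq_div_iff h]
    field_simp
    ring
  rw [this, cos_sub_pi_div_two]
  field_simp

lemma sin_div_sq_div_sub_le {t y : ℝ} (ht0 : 0 < t) (ht : t ≤ π / 4) (hy : π / 2 ≤ y)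
    (hyπ : y ^ 2 / (y - t) ≤ π) :
    sin (y ^ 2 / (y - t)) / (y ^ 2 / (y - t)) ≤
      sin y / y * ((1 - 2 / π * t) * cos (t / (1 - 2 / π * t))) := by
  have hπ := pi_pos
  have hty : t < y := by linarith
  have hyg := le_sq_div_sub ht0.le hty
  have hvg : (π / 2) ^ 2 / (π / 2 - t) ≤ y ^ 2 / (y - t) :=
    monotoneOn_sq_div_sub ht0 (by simp only [mem_Ici]; linarith)
      (by simp only [mem_Ici]; linarith) hy
  have hvpos : 0 < (π / 2) ^ 2 / (π / 2 - t) := div_pos (by positivity) (by linarith)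
  rw [one_sub_mul_cos_div_eq (by linarith)]
  rcases hyπ.lt_or_eq with hyπ | hyπ
  · have hsinc : ∀ z, 0 < z → z < π → 0 < sin z / z := fun z hz0 hzπ =>
      div_pos (sin_pos_of_pos_of_lt_pi hz0 hzπ) hz0
    have hX := hsinc _ (by linarith) hyπ
    have hY := hsinc y (by linarith) (by linarith)
    have hV := hsinc _ hvpos (by linarith)
    have hmono := antitoneOn_log_sin_div_sq_div_sub ht0 ht hyπ ⟨le_rfl, hy⟩ ⟨hy, le_rfl⟩ hy
    simp only [sin_pi_div_two, one_div_div] at hmono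
    rw [← log_le_log_iff hX (by positivity), log_mul hY.ne' (by positivity),
      log_mul hV.ne' (by positivity)]
    have h2π : log (2 / π) = -log (π / 2) := by rw [← log_inv, inv_div]
    linarith
  · rw [hyπ, sin_pi, zero_div]
    have hsv := sin_nonneg_of_nonneg_of_le_pi hvpos.le (by linarith)
    have hsy := sin_nonneg_of_nonneg_of_le_pi (x := y) (by linarith) (by linarith)
    exact mul_nonneg (div_nonneg hsy (by linarith))
      (mul_nonneg (div_nonneg hsv hvpos.le) (by positivity))

/-- The `sinc` inequality (Lemma `lem:sinc`): for `π/2 ≤ y < x ≤ π`,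
`sinc(y)·(1 − (2/π)y(1 − y/x))·cos(y(1 − y/x)/(1 − (2/π)y(1 − y/x))) ≥ sinc(x)`,
where `sinc(z) = sin(z)/z`. -/
theorem stmt18 (x y : ℝ) (hy : Real.pi / 2 ≤ y) (hyx : y < x) (hx : x ≤ Real.pi) :
    Real.sin x / x ≤
      (Real.sin y / y) * (1 - (2 / Real.pi) * y * (1 - y / x)) *
        Real.cos (y * (1 - y / x) / (1 - (2 / Real.pi) * y * (1 - y / x))) := by
  have hπ := pi_pos
  have hy0 : 0 < y := by linarith
  have hx0 : 0 < x := by linarith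
  have ht_eq : y * (1 - y / x) = y * (x - y) / x := by field_simp
  have hyt : y ^ 2 / (y - y * (1 - y / x)) = x := by
    rw [ht_eq, show y - y * (x - y) / x = y ^ 2 / x by field_simp; ring]
    exact div_div_cancel₀ (by positivity)
  have ht0 : 0 < y * (1 - y / x) := by
    rw [ht_eq]
    exact div_pos (mul_pos hy0 (by linarith)) hx0
  have ht : y * (1 - y / x) ≤ π / 4 := by
    rw [ht_eq, div_le_iff₀ hx0]
    nlinarith [mul_nonneg (by linarith : 0 ≤ 2 * y - π) (by linarith : 0 ≤ 2 * y - 2 * x + π)]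
  have key := sin_div_sq_div_sub_le ht0 ht hy (by rw [hyt]; exact hx)
  rw [hyt] at key
  simpa only [mul_assoc] using key
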